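/- Let G be a graph and let t, t' be exchangeable tubes of G which are not a maximal exchangeable pair; say |t \ t'| ≥ 2, and let w ∈ t \ t' be a non-disconnecting vertex of t \ t' different from the unique neighbor v of t' in t \ t'. Then, setting s := t \ {w} and s' := (t ∪ t') \ {w}, the pairs {s, t'} and {t, s'} are exchangeable, and the normal vectors satisfy n(s, t') + n(t, s') = n(t, t'), where n(a,b) := f_a + f_b − f_{a∪b} − Σ_{c ∈ cc(a ∩ b)} f_c in the free vector space ℝ^{T(G)} with canonical basis (f_t). -/

import Mathlib

open scoped Classical

variable {V : Type*} [Fintype V] [DecidableEq V]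

/-- A tube of `G`: a nonempty vertex subset inducing a connected subgraph. -/
def IsTube (G : SimpleGraph V) (t : Finset V) : Prop :=
  t.Nonempty ∧ (G.induce (t : Set V)).Connected

/-- The set of all tubes of `G`. -/
noncomputable def tubes (G : SimpleGraph V) : Finset (Finset V) :=
  Finset.univ.powerset.filter (fun t => IsTube G t)

/-- Compatibility of tubes: nested, or disjoint with non-tube union. -/
def Compatible (G : SimpleGraph V) (t t' : Finset V) : Prop :=
  t ⊆ t' ∨ t' ⊆ t ∨ (t ∩ t' = ∅ ∧ ¬ IsTube G (t ∪ t'))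

/-- A tubing on `G`: pairwise compatible tubes containing all connected components
(that is, all inclusion-maximal tubes). -/
def IsTubing (G : SimpleGraph V) (T : Finset (Finset V)) : Prop :=
  (∀ t ∈ T, IsTube G t) ∧
  (∀ t ∈ T, ∀ t' ∈ T, Compatible G t t') ∧
  (∀ K : Finset V, IsTube G K → (∀ t : Finset V, IsTube G t → K ⊆ t → K = t) → K ∈ T)

/-- A maximal tubing on `G`. -/
def IsMaxTubing (G : SimpleGraph V) (T : Finset (Finset V)) : Prop :=
  IsTubing G T ∧ ∀ T', IsTubing G T' → T ⊆ T' → T = T'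

/-- Two tubes are exchangeable if two maximal tubings differ exactly by them. -/
def ExchangeableT (G : SimpleGraph V) (t t' : Finset V) : Prop :=
  t ≠ t' ∧ ∃ T T', IsMaxTubing G T ∧ IsMaxTubing G T' ∧ t ∈ T ∧ t' ∈ T' ∧
    T.erase t = T'.erase t'

/-- `u` is a neighbor of the vertex set `s`: `u ∉ s` and `u` is adjacent to some vertex of `s`. -/
def NbrOf (G : SimpleGraph V) (s : Finset V) (u : V) : Prop :=
  u ∉ s ∧ ∃ x ∈ s, G.Adj u x

/-- Connected components of the induced subgraph on `U`:
inclusion-maximal tubes contained in `U`. -/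
noncomputable def gccSet (G : SimpleGraph V) (U : Finset V) : Finset (Finset V) :=
  (tubes G).filter (fun K => K ⊆ U ∧ ∀ C : Finset V, IsTube G C → C ⊆ U → K ⊆ C → K = C)

/-- Characteristic vector of a subset of `V` in `ℝ^V`. -/
def chi (S : Finset V) : V → ℝ := fun v => if v ∈ S then 1 else 0

/-- `w` is a non-disconnecting vertex of the set `s`. -/
def NonDisc (G : SimpleGraph V) (s : Finset V) (w : V) : Prop :=
  w ∈ s ∧ (s.erase w = ∅ ∨ IsTube G (s.erase w))

/-- Canonical basis vector `f_s` of `ℝ^{T(G)}`, seen in `Finset V → ℝ`. -/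
noncomputable def fvec (s : Finset V) : Finset V → ℝ := fun r => if r = s then 1 else 0

/-- The normal vector `n(a, b) = f_a + f_b - f_{a ∪ b} - ∑_{c ∈ cc(a ∩ b)} f_c`. -/
noncomputable def nvec (G : SimpleGraph V) (a b : Finset V) : Finset V → ℝ :=
  fvec a + fvec b - fvec (a ∪ b) - ∑ c ∈ gccSet G (a ∩ b), fvec c

/-!
Exchangeability can be certified locally. If `a`, `b` and `a ∪ b` are tubes, the only
neighbour of `a` in `b \ a` is `vb` and the only neighbour of `b` in `a \ b` is `va`, list the
vertices as `(a ∪ b) \ {va, vb}`, then `va`, then `vb`, then the rest, and take for every vertex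
`x` the component of `x` among the vertices up to `x`. This is a maximal tubing containing `a`
and `a ∪ b`, and swapping `va` and `vb` in the list replaces `a` by `b` and changes no other tube.

Conversely, for exchangeable `t, t'` the union `t ∪ t'` is a tube and `t` has a unique neighbour
`v'` in `t' \ t`. Being different from `v`, the vertex `w` has no neighbour in `t'`, so all its
neighbours in `t` lie in the connected set `(t \ t') \ {w}` and `t \ {w}` is still a tube. The
criterion applies to `(t \ {w}, t')` with `v, v'` and to `(t, (t ∪ t') \ {w})` with `w, v'`.
The normal vectors then cancel because `(t \ {w}) ∩ t' = t ∩ t'` and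
`t ∩ ((t ∪ t') \ {w}) = t \ {w}` is a single tube.
-/

namespace IsTube

omit [Fintype V]

variable {G : SimpleGraph V} {s u : Finset V}

omit [DecidableEq V] in
lemma singleton (x : V) : IsTube G {x} := by
  refine ⟨Finset.singleton_nonempty x, ?_⟩
  rw [Finset.coe_singleton, SimpleGraph.induce_singleton_eq_top]
  exact SimpleGraph.connected_top

lemma pair {a b : V} (hab : G.Adj a b) : IsTube G {a, b} := by
  refine ⟨Finset.insert_nonempty a {b}, ?_⟩
  rw [Finset.coe_pair]
  exact G.induce_pair_connected_of_adj hab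

lemma union_of_inter (hs : IsTube G s) (hu : IsTube G u) (h : (s ∩ u).Nonempty) :
    IsTube G (s ∪ u) := by
  refine ⟨hs.1.mono Finset.subset_union_left, ?_⟩
  rw [Finset.coe_union]
  exact G.induce_union_connected hs.2.preconnected hu.2.preconnected
    (by simpa [← Finset.coe_inter] using h)

lemma union_of_adj (hs : IsTube G s) (hu : IsTube G u) {a b : V} (ha : a ∈ s) (hb : b ∈ u)
    (hab : G.Adj a b) : IsTube G (s ∪ u) := by
  refine ⟨hs.1.mono Finset.subset_union_left, ?_⟩
  rw [Finset.coe_union]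
  exact G.connected_induce_union hs.2.preconnected hu.2.preconnected ha hb hab

lemma exists_adj_sdiff (hu : IsTube G u) (hsu : s ⊆ u) (hs : s.Nonempty)
    (hus : (u \ s).Nonempty) : ∃ a ∈ s, ∃ b ∈ u \ s, G.Adj a b := by
  obtain ⟨x, hx⟩ := hs
  obtain ⟨y, hy⟩ := hus
  rw [Finset.mem_sdiff] at hy
  obtain ⟨p⟩ := hu.2.preconnected ⟨x, hsu hx⟩ ⟨y, hy.1⟩
  obtain ⟨d, -, hd₁, hd₂⟩ := p.exists_boundary_dart {z | z.1 ∈ s} hx hy.2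
  exact ⟨d.fst, hd₁, d.snd, Finset.mem_sdiff.2 ⟨d.snd.2, hd₂⟩, d.adj⟩

end IsTube

section Compatibility

omit [Fintype V]

variable {G : SimpleGraph V}

def Separated (G : SimpleGraph V) (s u : Finset V) : Prop :=
  Disjoint s u ∧ ∀ a ∈ s, ∀ b ∈ u, ¬ G.Adj a b

omit [DecidableEq V] in
lemma Separated.symm {s u : Finset V} (h : Separated G s u) : Separated G u s :=
  ⟨h.1.symm, fun a ha b hb hab => h.2 b hb a ha hab.symm⟩

omit [DecidableEq V] in
lemma Separated.mono_left {s s' u : Finset V} (h : Separated G s u) (hs : s' ⊆ s) :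
    Separated G s' u :=
  ⟨h.1.mono_left hs, fun a ha => h.2 a (hs ha)⟩

lemma Separated.not_isTube_union {s u : Finset V} (h : Separated G s u) (hs : s.Nonempty)
    (hu : u.Nonempty) : ¬ IsTube G (s ∪ u) := by
  intro hsu
  obtain ⟨a, ha, b, hb, hab⟩ := hsu.exists_adj_sdiff Finset.subset_union_left hs
    (by rwa [Finset.union_sdiff_left, h.1.symm.sdiff_eq_left])
  rw [Finset.union_sdiff_left, h.1.symm.sdiff_eq_left] at hb
  exact h.2 a ha b hb hab

lemma Separated.compatible {s u : Finset V} (h : Separated G s u) (hs : s.Nonempty)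
    (hu : u.Nonempty) : Compatible G s u :=
  Or.inr (Or.inr ⟨Finset.disjoint_iff_inter_eq_empty.1 h.1, h.not_isTube_union hs hu⟩)

lemma Compatible.symm {s u : Finset V} (h : Compatible G s u) : Compatible G u s := by
  rcases h with h | h | ⟨hd, hnt⟩
  · exact Or.inr (Or.inl h)
  · exact Or.inl h
  · exact Or.inr (Or.inr ⟨by rwa [Finset.inter_comm], by rwa [Finset.union_comm]⟩)

lemma IsMaxTubing.mem_of_forall_compatible {T : Finset (Finset V)}
    (hT : IsMaxTubing G T) {u : Finset V} (hu : IsTube G u) (hcomp : ∀ x ∈ T, Compatible G u x) :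
    u ∈ T := by
  have htub : IsTubing G (insert u T) := by
    refine ⟨?_, ?_, fun K h₁ h₂ => Finset.mem_insert_of_mem (hT.1.2.2 K h₁ h₂)⟩
    · simp only [Finset.forall_mem_insert]
      exact ⟨hu, hT.1.1⟩
    · simp only [Finset.forall_mem_insert]
      exact ⟨⟨Or.inl subset_rfl, hcomp⟩, fun x hx => ⟨(hcomp x hx).symm, hT.1.2.1 x hx⟩⟩
  exact hT.2 _ htub (Finset.subset_insert u T) ▸ Finset.mem_insert_self u T

end Compatibility

section ComponentIn

omit [Fintype V]

variable {G : SimpleGraph V} {P s : Finset V} {x : V}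

/-- The connected component of `x` in `G[P]`, as the union of the tubes inside `P` through `x`;
it is empty when `x ∉ P`. -/
noncomputable def componentIn (G : SimpleGraph V) (P : Finset V) (x : V) : Finset V :=
  (P.powerset.filter fun s => x ∈ s ∧ IsTube G s).sup id

lemma IsTube.subset_componentIn (hs : IsTube G s) (hsP : s ⊆ P) (hx : x ∈ s) :
    s ⊆ componentIn G P x :=
  Finset.le_sup (f := id) (Finset.mem_filter.2 ⟨Finset.mem_powerset.2 hsP, hx, hs⟩)

lemma componentIn_subset : componentIn G P x ⊆ P :=
  Finset.sup_le fun _ hs => Finset.mem_powerset.1 (Finset.mem_filter.1 hs).1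

lemma mem_of_mem_componentIn {a : V} (ha : a ∈ componentIn G P x) : x ∈ P := by
  obtain ⟨s, hs, -⟩ := Finset.mem_sup.1 ha
  obtain ⟨hsP, hxs, -⟩ := Finset.mem_filter.1 hs
  exact Finset.mem_powerset.1 hsP hxs

lemma mem_componentIn_self (hx : x ∈ P) : x ∈ componentIn G P x :=
  (IsTube.singleton x).subset_componentIn (Finset.singleton_subset_iff.2 hx)
    (Finset.mem_singleton_self x) (Finset.mem_singleton_self x)

lemma isTube_componentIn (hx : x ∈ P) : IsTube G (componentIn G P x) := by
  have key : componentIn G P x = ∅ ∨ x ∈ componentIn G P x ∧ IsTube G (componentIn G P x) := by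
    refine Finset.sup_induction (p := fun S => S = ∅ ∨ x ∈ S ∧ IsTube G S) (Or.inl rfl) ?_
      fun s hs => Or.inr (Finset.mem_filter.1 hs).2
    rintro a (rfl | ⟨hxa, ha⟩) b (rfl | ⟨hxb, hb⟩)
    · exact Or.inl (Finset.empty_union ∅)
    · exact Or.inr (by simpa using And.intro hxb hb)
    · exact Or.inr (by simpa using And.intro hxa ha)
    · exact Or.inr ⟨Finset.mem_union_left _ hxa,
        ha.union_of_inter hb ⟨x, Finset.mem_inter.2 ⟨hxa, hxb⟩⟩⟩
  exact (key.resolve_left (Finset.ne_empty_of_mem (mem_componentIn_self hx))).2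

lemma IsTube.subset_componentIn_of_inter (hs : IsTube G s) (hsP : s ⊆ P)
    (hmeet : (s ∩ componentIn G P x).Nonempty) : s ⊆ componentIn G P x := by
  obtain ⟨a, ha⟩ := hmeet
  have hx := mem_of_mem_componentIn (Finset.mem_inter.1 ha).2
  have hunion := hs.union_of_inter (isTube_componentIn (G := G) hx) ⟨a, ha⟩
  exact Finset.subset_union_left.trans (hunion.subset_componentIn
    (Finset.union_subset hsP componentIn_subset)
    (Finset.mem_union_right _ (mem_componentIn_self hx)))

lemma mem_componentIn_of_adj {a b : V} (ha : a ∈ componentIn G P x) (hb : b ∈ P)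
    (hab : G.Adj a b) : b ∈ componentIn G P x :=
  (IsTube.pair hab).subset_componentIn_of_inter
    (Finset.insert_subset (componentIn_subset ha) (Finset.singleton_subset_iff.2 hb))
    ⟨a, by simp [ha]⟩ (by simp)

lemma componentIn_eq_of_adj_mem (hs : IsTube G s) (hsP : s ⊆ P) (hx : x ∈ s)
    (hclosed : ∀ a ∈ s, ∀ b ∈ P, G.Adj a b → b ∈ s) : componentIn G P x = s := by
  refine Finset.Subset.antisymm (fun y hy => ?_) (hs.subset_componentIn hsP hx)
  by_contra hys
  obtain ⟨a, ha, b, hb, hab⟩ := (isTube_componentIn (hsP hx)).exists_adj_sdiff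
    (hs.subset_componentIn hsP hx) ⟨x, hx⟩ ⟨y, Finset.mem_sdiff.2 ⟨hy, hys⟩⟩
  rw [Finset.mem_sdiff] at hb
  exact hb.2 (hclosed a ha b (componentIn_subset hb.1) hab)

lemma IsTube.componentIn_eq_self (hP : IsTube G P) (hx : x ∈ P) : componentIn G P x = P :=
  componentIn_eq_of_adj_mem hP subset_rfl hx fun _ _ _ hb _ => hb

lemma compatible_componentIn (hx : x ∈ P) (hs : IsTube G s)
    (h : s ⊆ P ∨ P ⊆ s ∨ Separated G s P) : Compatible G (componentIn G P x) s := by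
  rcases h with hsP | hPs | hsep
  · by_cases hmeet : (s ∩ componentIn G P x).Nonempty
    · exact Or.inr (Or.inl (hs.subset_componentIn_of_inter hsP hmeet))
    · refine Separated.compatible ⟨?_, fun a ha b hb hab => hmeet ?_⟩
        ⟨x, mem_componentIn_self hx⟩ hs.1
      · rw [Finset.disjoint_iff_inter_eq_empty, Finset.inter_comm]
        exact Finset.not_nonempty_iff_eq_empty.1 hmeet
      · exact ⟨b, Finset.mem_inter.2 ⟨hb, mem_componentIn_of_adj ha (hsP hb) hab⟩⟩
  · exact Or.inl (componentIn_subset.trans hPs)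
  · exact (hsep.symm.mono_left componentIn_subset).compatible ⟨x, mem_componentIn_self hx⟩ hs.1

lemma IsTube.exists_adj_componentIn_erase (hc : IsTube G P) (hx : x ∈ P) {z : V}
    (hz : z ∈ P.erase x) : ∃ y ∈ componentIn G (P.erase x) z, G.Adj y x := by
  obtain ⟨a, ha, b, hb, hab⟩ := hc.exists_adj_sdiff
    (componentIn_subset.trans (Finset.erase_subset x P)) ⟨z, mem_componentIn_self hz⟩
    ⟨x, Finset.mem_sdiff.2 ⟨hx, fun h => (Finset.mem_erase.1 (componentIn_subset h)).1 rfl⟩⟩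
  rw [Finset.mem_sdiff] at hb
  by_cases hbx : b = x
  · exact ⟨a, ha, hbx ▸ hab⟩
  · exact absurd (mem_componentIn_of_adj ha (Finset.mem_erase.2 ⟨hbx, hb.1⟩) hab) hb.2

lemma IsTube.erase_of_adj_mem (ht : IsTube G P) (hx : x ∈ P) (hs : IsTube G s)
    (hsP : s ⊆ P.erase x) (hadj : ∀ y ∈ P, G.Adj x y → y ∈ s) : IsTube G (P.erase x) := by
  obtain ⟨x₀, hx₀⟩ := hs.1
  suffices componentIn G (P.erase x) x₀ = P.erase x from this ▸ isTube_componentIn (hsP hx₀)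
  refine Finset.Subset.antisymm componentIn_subset fun y hy => ?_
  obtain ⟨y', hy'K, hy'x⟩ := ht.exists_adj_componentIn_erase hx hy
  have hs₀ : s ⊆ componentIn G (P.erase x) x₀ := hs.subset_componentIn hsP hx₀
  have hy's : y' ∈ s := hadj y' (Finset.mem_of_mem_erase (componentIn_subset hy'K)) hy'x.symm
  exact (isTube_componentIn hy).subset_componentIn_of_inter componentIn_subset
    ⟨y', Finset.mem_inter.2 ⟨hy'K, hs₀ hy's⟩⟩ (mem_componentIn_self hy)

lemma compatible_componentIn_erase_union {t t' x : Finset V} {u₁ u₂ z : V} (hx : IsTube G x)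
    (ht : IsTube G t) (ht' : IsTube G t') (htt' : IsTube G (t ∪ t')) (hnsub : ¬ t ⊆ t')
    (hu₁ : u₁ ∈ t' \ t) (hz : z ∈ t) (hzu₁ : G.Adj z u₁)
    (hu₂ : u₂ ∈ (t ∪ t').erase u₁) (hxt : Compatible G x t) (hxt' : Compatible G x t') :
    Compatible G (componentIn G ((t ∪ t').erase u₁) u₂) x := by
  rw [Finset.mem_sdiff] at hu₁
  refine compatible_componentIn hu₂ hx ?_
  rcases hxt with hxt | htx | ⟨hd, hnt⟩
  · exact Or.inl fun y hy => Finset.mem_erase.2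
      ⟨ne_of_mem_of_not_mem (hxt hy) hu₁.2, Finset.mem_union_left _ (hxt hy)⟩
  · rcases hxt' with hxt' | ht'x | ⟨-, hnt'⟩
    · exact absurd (htx.trans hxt') hnsub
    · exact Or.inr (Or.inl ((Finset.erase_subset _ _).trans (Finset.union_subset htx ht'x)))
    · refine absurd ?_ hnt'
      rw [← Finset.union_eq_left.2 htx, Finset.union_assoc]
      exact hx.union_of_inter htt' ⟨z, Finset.mem_inter.2 ⟨htx hz, Finset.mem_union_left _ hz⟩⟩
  · have hu₁x : u₁ ∉ x := fun h => hnt (hx.union_of_adj ht h hz hzu₁.symm)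
    rcases hxt' with hxt' | ht'x | ⟨hd', hnt'⟩
    · exact Or.inl fun y hy => Finset.mem_erase.2
        ⟨ne_of_mem_of_not_mem hy hu₁x, Finset.mem_union_right _ (hxt' hy)⟩
    · exact absurd (ht'x hu₁.1) hu₁x
    · refine Or.inr (Or.inr ⟨?_, fun a ha b hb hab => ?_⟩)
      · rw [← Finset.disjoint_iff_inter_eq_empty] at hd hd'
        exact (Finset.disjoint_union_right.2 ⟨hd, hd'⟩).mono_right (Finset.erase_subset _ _)
      · rcases Finset.mem_union.1 (Finset.mem_of_mem_erase hb) with hbt | hbt'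
        · exact hnt (hx.union_of_adj ht ha hbt hab)
        · exact hnt' (hx.union_of_adj ht' ha hbt' hab)

end ComponentIn

section RankTubing

variable {G : SimpleGraph V} {ρ : V → ℕ}

def sublevel (ρ : V → ℕ) (x : V) : Finset V :=
  Finset.univ.filter fun y => ρ y ≤ ρ x

omit [DecidableEq V] in
@[simp]
lemma mem_sublevel {x y : V} : y ∈ sublevel ρ x ↔ ρ y ≤ ρ x := by
  simp [sublevel]

noncomputable def tubeAt (G : SimpleGraph V) (ρ : V → ℕ) (x : V) : Finset V :=
  componentIn G (sublevel ρ x) x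

noncomputable def rankTubing (G : SimpleGraph V) (ρ : V → ℕ) : Finset (Finset V) :=
  Finset.univ.image (tubeAt G ρ)

lemma mem_tubeAt_self (x : V) : x ∈ tubeAt G ρ x :=
  mem_componentIn_self (mem_sublevel.2 le_rfl)

lemma isTube_tubeAt (x : V) : IsTube G (tubeAt G ρ x) :=
  isTube_componentIn (mem_sublevel.2 le_rfl)

lemma tubeAt_mem_rankTubing (x : V) : tubeAt G ρ x ∈ rankTubing G ρ :=
  Finset.mem_image_of_mem _ (Finset.mem_univ x)

lemma le_of_mem_tubeAt {x y : V} (hy : y ∈ tubeAt G ρ x) : ρ y ≤ ρ x :=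
  mem_sublevel.1 (componentIn_subset hy)

lemma tubeAt_injective (hρ : Function.Injective ρ) : Function.Injective (tubeAt G ρ) :=
  fun x y h => hρ (le_antisymm (le_of_mem_tubeAt (h ▸ mem_tubeAt_self x))
    (le_of_mem_tubeAt (h ▸ mem_tubeAt_self y)))

lemma tubeAt_eq {K : Finset V} {y : V} (hK : IsTube G K) (hy : y ∈ K)
    (hKy : ∀ z ∈ K, ρ z ≤ ρ y) (hclosed : ∀ a ∈ K, ∀ b, ρ b ≤ ρ y → G.Adj a b → b ∈ K) :
    tubeAt G ρ y = K :=
  componentIn_eq_of_adj_mem hK (fun z hz => mem_sublevel.2 (hKy z hz)) hy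
    fun a ha b hb => hclosed a ha b (mem_sublevel.1 hb)

lemma IsTube.subset_tubeAt {K : Finset V} {y : V} (hK : IsTube G K) (hy : y ∈ K)
    (hKy : ∀ z ∈ K, ρ z ≤ ρ y) : K ⊆ tubeAt G ρ y :=
  hK.subset_componentIn (fun z hz => mem_sublevel.2 (hKy z hz)) hy

lemma compatible_tubeAt (x y : V) : Compatible G (tubeAt G ρ x) (tubeAt G ρ y) := by
  rcases le_total (ρ y) (ρ x) with hyx | hxy
  · exact compatible_componentIn (mem_sublevel.2 le_rfl) (isTube_tubeAt y)
      (Or.inl fun z hz => mem_sublevel.2 ((le_of_mem_tubeAt hz).trans hyx))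
  · exact (compatible_componentIn (mem_sublevel.2 le_rfl) (isTube_tubeAt x)
      (Or.inl fun z hz => mem_sublevel.2 ((le_of_mem_tubeAt hz).trans hxy))).symm

lemma rankTubing_isTubing : IsTubing G (rankTubing G ρ) := by
  refine ⟨?_, ?_, fun K hK hmax => ?_⟩
  · simp only [rankTubing, Finset.forall_mem_image]
    exact fun x _ => isTube_tubeAt x
  · simp only [rankTubing, Finset.forall_mem_image]
    exact fun x _ y _ => compatible_tubeAt x y
  · obtain ⟨x, hxK, hxmax⟩ := K.exists_max_image ρ hK.1
    rw [hmax _ (isTube_tubeAt x) (hK.subset_tubeAt hxK hxmax)]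
    exact tubeAt_mem_rankTubing x

lemma componentIn_erase_mem_rankTubing (hρ : Function.Injective ρ) {x z : V}
    (hz : z ∈ (tubeAt G ρ x).erase x) :
    componentIn G ((tubeAt G ρ x).erase x) z ∈ rankTubing G ρ := by
  set K := componentIn G ((tubeAt G ρ x).erase x) z
  obtain ⟨y, hyK, hymax⟩ := K.exists_max_image ρ ⟨z, mem_componentIn_self hz⟩
  obtain ⟨hyx, hyc⟩ := Finset.mem_erase.1 (componentIn_subset hyK)
  have hlt : ρ y < ρ x := (le_of_mem_tubeAt hyc).lt_of_ne (hρ.ne hyx)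
  suffices tubeAt G ρ y = K from this ▸ tubeAt_mem_rankTubing y
  refine tubeAt_eq (isTube_componentIn hz) hyK hymax fun a ha b hb hab => ?_
  have hbx : ρ b < ρ x := hb.trans_lt hlt
  have hbc : b ∈ tubeAt G ρ x := mem_componentIn_of_adj
    (Finset.mem_of_mem_erase (componentIn_subset ha)) (mem_sublevel.2 hbx.le) hab
  exact mem_componentIn_of_adj ha (Finset.mem_erase.2 ⟨fun h => hbx.ne (congrArg ρ h), hbc⟩) hab

lemma rankTubing_isMaxTubing (hρ : Function.Injective ρ) : IsMaxTubing G (rankTubing G ρ) := by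
  refine ⟨rankTubing_isTubing, fun T hT hsub => Finset.Subset.antisymm hsub fun u hu => ?_⟩
  have hut := hT.1 u hu
  obtain ⟨x, hxu, hxmax⟩ := u.exists_max_image ρ hut.1
  suffices tubeAt G ρ x ⊆ u from
    Finset.Subset.antisymm (hut.subset_tubeAt hxu hxmax) this ▸ tubeAt_mem_rankTubing x
  intro z hzc
  by_contra hzu
  have hz : z ∈ (tubeAt G ρ x).erase x := Finset.mem_erase.2 ⟨fun h => hzu (h ▸ hxu), hzc⟩
  set K := componentIn G ((tubeAt G ρ x).erase x) z
  have hxK : x ∉ K := fun h => (Finset.mem_erase.1 (componentIn_subset h)).1 rfl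
  obtain ⟨y, hyK, hyx⟩ := (isTube_tubeAt x).exists_adj_componentIn_erase (mem_tubeAt_self x) hz
  rcases hT.2.1 u hu K (hsub (componentIn_erase_mem_rankTubing hρ hz)) with h | h | ⟨-, hnt⟩
  · exact hxK (h hxu)
  · exact hzu (h (mem_componentIn_self hz))
  · exact hnt (hut.union_of_adj (isTube_componentIn hz) hxu hyK hyx.symm)

lemma rankTubing_erase_eq {ρ₀ ρ₁ : V → ℕ} (h₀ : Function.Injective ρ₀)
    (h₁ : Function.Injective ρ₁) {p q : V} (hpq : tubeAt G ρ₀ q = tubeAt G ρ₁ p)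
    (hother : ∀ x, x ≠ p → x ≠ q → tubeAt G ρ₀ x = tubeAt G ρ₁ x) :
    (rankTubing G ρ₀).erase (tubeAt G ρ₀ p) = (rankTubing G ρ₁).erase (tubeAt G ρ₁ q) := by
  have hswap : Set.EqOn (tubeAt G ρ₀) (tubeAt G ρ₁ ∘ Equiv.swap p q) ↑(Finset.univ.erase p) := by
    intro x hx
    obtain ⟨hxp, -⟩ := Finset.mem_erase.1 hx
    by_cases hxq : x = q
    · subst hxq
      simpa using hpq
    · simpa [Equiv.swap_apply_of_ne_of_ne hxp hxq] using hother x hxp hxq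
  rw [rankTubing, rankTubing, ← Finset.image_erase (tubeAt_injective h₀),
    ← Finset.image_erase (tubeAt_injective h₁), Finset.image_congr hswap, ← Finset.image_image,
    Finset.image_erase (Equiv.injective _), Finset.image_univ_equiv, Equiv.swap_apply_left]

end RankTubing

section Exchange

variable {G : SimpleGraph V}

noncomputable def exchangeRank (U : Finset V) (p q : V) (y : V) : ℕ :=
  if y = p then Fintype.card V
  else if y = q then Fintype.card V + 1
  else if y ∈ U then Fintype.equivFin V y
  else Fintype.card V + 2 + Fintype.equivFin V y

variable {U : Finset V} {p q : V}

lemma exchangeRank_injective (hpq : p ≠ q) : Function.Injective (exchangeRank U p q) := by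
  intro x y h
  have hx := (Fintype.equivFin V x).isLt
  have hy := (Fintype.equivFin V y).isLt
  have hfin : (Fintype.equivFin V x : ℕ) = Fintype.equivFin V y → x = y :=
    fun h => (Fintype.equivFin V).injective (Fin.ext h)
  unfold exchangeRank at h
  split_ifs at h <;> first | (subst_vars; rfl) | omega | exact hfin (by omega)

lemma sublevel_exchangeRank_left (hp : p ∈ U) (hpq : p ≠ q) :
    sublevel (exchangeRank U p q) p = U.erase q := by
  ext y
  have := (Fintype.equivFin V y).isLt
  simp only [mem_sublevel, exchangeRank, Finset.mem_erase]
  split_ifs <;> simp_all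
  omega

lemma sublevel_exchangeRank_right (hp : p ∈ U) (hq : q ∈ U) :
    sublevel (exchangeRank U p q) q = U := by
  ext y
  have := (Fintype.equivFin V y).isLt
  simp only [mem_sublevel, exchangeRank]
  split_ifs <;> simp_all <;> omega

lemma sublevel_exchangeRank_comm {x : V} (hxp : x ≠ p) (hxq : x ≠ q) :
    sublevel (exchangeRank U p q) x = sublevel (exchangeRank U q p) x := by
  ext y
  have := (Fintype.equivFin V x).isLt
  have := (Fintype.equivFin V y).isLt
  simp only [mem_sublevel, exchangeRank]
  split_ifs <;> simp_all <;> omega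

lemma tubeAt_exchangeRank_left {a : Finset V} (ha : IsTube G a) (hp : p ∈ a) (hq : q ∉ a)
    (haU : a ⊆ U) (hadj : ∀ x ∈ a, ∀ y ∈ U \ a, G.Adj x y → y = q) :
    tubeAt G (exchangeRank U p q) p = a := by
  rw [tubeAt, sublevel_exchangeRank_left (haU hp) (ne_of_mem_of_not_mem hp hq)]
  refine componentIn_eq_of_adj_mem ha (fun y hy => Finset.mem_erase.2 ⟨?_, haU hy⟩) hp
    fun x hx y hy hxy => ?_
  · rintro rfl
    exact hq hy
  · by_contra hya
    obtain ⟨hyq, hyU⟩ := Finset.mem_erase.1 hy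
    exact hyq (hadj x hx y (Finset.mem_sdiff.2 ⟨hyU, hya⟩) hxy)

lemma tubeAt_exchangeRank_right (hU : IsTube G U) (hp : p ∈ U) (hq : q ∈ U) :
    tubeAt G (exchangeRank U p q) q = U := by
  rw [tubeAt, sublevel_exchangeRank_right hp hq, hU.componentIn_eq_self hq]

lemma tubeAt_exchangeRank_comm {x : V} (hxp : x ≠ p) (hxq : x ≠ q) :
    tubeAt G (exchangeRank U p q) x = tubeAt G (exchangeRank U q p) x := by
  rw [tubeAt, tubeAt, sublevel_exchangeRank_comm hxp hxq]

theorem exchangeableT_of_unique_adj {a b : Finset V} (ha : IsTube G a) (hb : IsTube G b)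
    (hab : IsTube G (a ∪ b)) {va vb : V} (hva : va ∈ a \ b) (hvb : vb ∈ b \ a)
    (hadj_a : ∀ x ∈ a, ∀ y ∈ b \ a, G.Adj x y → y = vb)
    (hadj_b : ∀ x ∈ b, ∀ y ∈ a \ b, G.Adj x y → y = va) :
    ExchangeableT G a b := by
  rw [Finset.mem_sdiff] at hva hvb
  have hne : va ≠ vb := fun h => hva.2 (h ▸ hvb.1)
  have hvaU : va ∈ a ∪ b := Finset.mem_union_left _ hva.1
  have hvbU : vb ∈ a ∪ b := Finset.mem_union_right _ hvb.1
  have h₀ : tubeAt G (exchangeRank (a ∪ b) va vb) va = a :=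
    tubeAt_exchangeRank_left ha hva.1 hvb.2 Finset.subset_union_left
      (by simpa only [Finset.union_sdiff_left] using hadj_a)
  have h₁ : tubeAt G (exchangeRank (a ∪ b) vb va) vb = b :=
    tubeAt_exchangeRank_left hb hvb.1 hva.2 Finset.subset_union_right
      (by simpa only [Finset.union_sdiff_right] using hadj_b)
  have hU : tubeAt G (exchangeRank (a ∪ b) va vb) vb = tubeAt G (exchangeRank (a ∪ b) vb va) va :=
    (tubeAt_exchangeRank_right hab hvaU hvbU).trans (tubeAt_exchangeRank_right hab hvbU hvaU).symm
  have herase := rankTubing_erase_eq (exchangeRank_injective hne)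
    (exchangeRank_injective hne.symm) hU fun x hxa hxb => tubeAt_exchangeRank_comm hxa hxb
  have ha_mem := tubeAt_mem_rankTubing (G := G) (ρ := exchangeRank (a ∪ b) va vb) va
  have hb_mem := tubeAt_mem_rankTubing (G := G) (ρ := exchangeRank (a ∪ b) vb va) vb
  rw [h₀] at ha_mem herase
  rw [h₁] at hb_mem herase
  exact ⟨ne_of_mem_of_not_mem' hva.1 hva.2, _, _,
    rankTubing_isMaxTubing (exchangeRank_injective hne),
    rankTubing_isMaxTubing (exchangeRank_injective hne.symm), ha_mem, hb_mem, herase⟩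

end Exchange

namespace ExchangeableT

omit [Fintype V]

variable {G : SimpleGraph V} {t t' : Finset V}

lemma symm (h : ExchangeableT G t t') : ExchangeableT G t' t := by
  obtain ⟨hne, T, T', hT, hT', htT, ht'T', herase⟩ := h
  exact ⟨hne.symm, T', T, hT', hT, ht'T', htT, herase.symm⟩

lemma isTube_left (h : ExchangeableT G t t') : IsTube G t := by
  obtain ⟨-, T, -, hT, -, htT, -⟩ := h
  exact hT.1.1 t htT

lemma not_compatible (h : ExchangeableT G t t') : ¬ Compatible G t' t := by
  obtain ⟨hne, T, T', hT, hT', htT, ht'T', herase⟩ := h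
  intro hcomp
  have hmem : t' ∈ T.erase t := by
    refine Finset.mem_erase.2 ⟨hne.symm, hT.mem_of_forall_compatible (hT'.1.1 t' ht'T') ?_⟩
    intro x hx
    by_cases hxt : x = t
    · exact hxt ▸ hcomp
    · have hxT' : x ∈ T'.erase t' := herase ▸ Finset.mem_erase.2 ⟨hxt, hx⟩
      exact hT'.1.2.1 t' ht'T' x (Finset.mem_of_mem_erase hxT')
  rw [herase] at hmem
  exact Finset.notMem_erase t' T' hmem

lemma not_subset (h : ExchangeableT G t t') : ¬ t ⊆ t' :=
  fun hs => h.not_compatible (Or.inr (Or.inl hs))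

lemma isTube_union (h : ExchangeableT G t t') : IsTube G (t ∪ t') := by
  by_cases hmeet : (t ∩ t').Nonempty
  · exact h.isTube_left.union_of_inter h.symm.isTube_left hmeet
  · by_contra hnt
    refine h.not_compatible (Or.inr (Or.inr ⟨?_, by rwa [Finset.union_comm]⟩))
    rw [Finset.inter_comm]
    exact Finset.not_nonempty_iff_eq_empty.1 hmeet

lemma exists_adj (h : ExchangeableT G t t') : ∃ u ∈ t' \ t, ∃ z ∈ t, G.Adj z u := by
  have hsdiff : (t' \ t).Nonempty := Finset.sdiff_nonempty.2 h.symm.not_subset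
  obtain ⟨z, hz, u, hu, hzu⟩ := h.isTube_union.exists_adj_sdiff Finset.subset_union_left
    h.isTube_left.1 (by rwa [Finset.union_sdiff_left])
  rw [Finset.union_sdiff_left] at hu
  exact ⟨u, hu, z, hz, hzu⟩

/-- If `u₁ ≠ u₂` were two neighbours of `t` in `t' \ t`, the component of `u₂` in
`(t ∪ t') \ {u₁}` would be compatible with every tube of the tubing containing `t`, yet it is
incompatible with `t'`. -/
lemma eq_of_adj (h : ExchangeableT G t t') {u₁ u₂ : V} (hu₁ : u₁ ∈ t' \ t) (hu₂ : u₂ ∈ t' \ t)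
    (hadj₁ : ∃ z ∈ t, G.Adj z u₁) (hadj₂ : ∃ z ∈ t, G.Adj z u₂) : u₁ = u₂ := by
  obtain ⟨-, T, T', hT, hT', htT, ht'T', herase⟩ := id h
  obtain ⟨z₁, hz₁, hz₁u₁⟩ := hadj₁
  obtain ⟨z₂, hz₂, hz₂u₂⟩ := hadj₂
  rw [Finset.mem_sdiff] at hu₁ hu₂
  by_contra hne
  have hmemT' : ∀ x ∈ T, x ≠ t → x ∈ T' := fun x hx hxt =>
    Finset.mem_of_mem_erase (herase ▸ Finset.mem_erase.2 ⟨hxt, hx⟩ : x ∈ T'.erase t')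
  set P := (t ∪ t').erase u₁
  have hu₂P : u₂ ∈ P := Finset.mem_erase.2 ⟨Ne.symm hne, Finset.mem_union_right _ hu₂.1⟩
  have htP : t ⊆ P := fun y hy =>
    Finset.mem_erase.2 ⟨ne_of_mem_of_not_mem hy hu₁.2, Finset.mem_union_left _ hy⟩
  set c := componentIn G P u₂
  have htc : t ⊆ c := h.isTube_left.subset_componentIn_of_inter htP ⟨z₂, Finset.mem_inter.2
    ⟨hz₂, mem_componentIn_of_adj (mem_componentIn_self hu₂P) (htP hz₂) hz₂u₂.symm⟩⟩
  have hcT : c ∈ T := by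
    refine hT.mem_of_forall_compatible (isTube_componentIn hu₂P) fun x hx => ?_
    by_cases hxt : x = t
    · exact Or.inr (Or.inl (hxt ▸ htc))
    · exact compatible_componentIn_erase_union (hT.1.1 x hx) h.isTube_left h.symm.isTube_left
        h.isTube_union h.not_subset (Finset.mem_sdiff.2 hu₁) hz₁ hz₁u₁ hu₂P
        (hT.1.2.1 x hx t htT) (hT'.1.2.1 x (hmemT' x hx hxt) t' ht'T')
  have hct : c ≠ t := ne_of_mem_of_not_mem' (mem_componentIn_self hu₂P) hu₂.2
  rcases hT'.1.2.1 c (hmemT' c hcT hct) t' ht'T' with hct' | ht'c | ⟨hd, -⟩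
  · exact h.not_subset (htc.trans hct')
  · exact (Finset.mem_erase.1 (componentIn_subset (ht'c hu₁.1))).1 rfl
  · exact Finset.notMem_empty u₂ (hd ▸ Finset.mem_inter.2 ⟨mem_componentIn_self hu₂P, hu₂.1⟩)

end ExchangeableT

lemma gccSet_eq_singleton {G : SimpleGraph V} {s : Finset V} (hs : IsTube G s) :
    gccSet G s = {s} := by
  ext K
  simp only [gccSet, tubes, Finset.mem_filter, Finset.mem_powerset, Finset.mem_singleton]
  constructor
  · rintro ⟨-, hKs, hmax⟩
    exact hmax s hs subset_rfl hKs
  · rintro rfl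
    exact ⟨⟨Finset.subset_univ _, hs⟩, subset_rfl, fun C _ hCs hsC => subset_antisymm hsC hCs⟩

omit [Fintype V] in
lemma erase_union_eq_of_notMem {s u : Finset V} {w : V} (hw : w ∉ u) :
    s.erase w ∪ u = (s ∪ u).erase w := by
  rw [Finset.erase_union_distrib, Finset.erase_eq_of_notMem hw]

lemma nvec_erase_add_nvec {G : SimpleGraph V} {t t' : Finset V} {w : V} (hw : w ∈ t)
    (hw' : w ∉ t') (hs : IsTube G (t.erase w)) :
    nvec G (t.erase w) t' + nvec G t ((t ∪ t').erase w) = nvec G t t' := by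
  have h_inter : t.erase w ∩ t' = t ∩ t' := by
    rw [Finset.erase_inter, Finset.erase_eq_of_notMem fun h => hw' (Finset.mem_inter.1 h).2]
  have h_union' : t ∪ (t ∪ t').erase w = t ∪ t' := by
    rw [Finset.union_erase_of_mem hw, Finset.union_left_idem]
  have h_inter' : t ∩ (t ∪ t').erase w = t.erase w := by
    rw [Finset.inter_erase, Finset.inter_eq_left.2 Finset.subset_union_left]
  simp only [nvec, h_inter, erase_union_eq_of_notMem hw', h_union', h_inter',
    gccSet_eq_singleton hs, Finset.sum_singleton]
  abel

theorem stmt15_general (G : SimpleGraph V) (t t' : Finset V)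
    (ht : IsTube G t) (ht' : IsTube G t') (hex : ExchangeableT G t t')
    (v : V) (hv : v ∈ t \ t')
    (hvuniq : ∀ u ∈ t \ t', NbrOf G t' u → u = v)
    (w : V) (hw : w ∈ t \ t') (hwv : w ≠ v) (hwnd : NonDisc G (t \ t') w) :
    ExchangeableT G (t.erase w) t' ∧
    ExchangeableT G t ((t ∪ t').erase w) ∧
    nvec G (t.erase w) t' + nvec G t ((t ∪ t').erase w) = nvec G t t' := by
  obtain ⟨hwt, hwt'⟩ := Finset.mem_sdiff.1 hw
  have hw_nadj : ∀ x ∈ t', ¬ G.Adj w x := fun x hx hwx => hwv (hvuniq w hw ⟨hwt', x, hx, hwx⟩)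
  have hcore : IsTube G ((t \ t').erase w) :=
    hwnd.2.resolve_left (Finset.ne_empty_of_mem (Finset.mem_erase.2 ⟨hwv.symm, hv⟩))
  have hs : IsTube G (t.erase w) := ht.erase_of_adj_mem hwt hcore
    (Finset.erase_subset_erase w Finset.sdiff_subset) fun y hy hwy =>
      Finset.mem_erase.2 ⟨hwy.ne.symm, Finset.mem_sdiff.2 ⟨hy, fun hy' => hw_nadj y hy' hwy⟩⟩
  obtain ⟨v', hv', z, hz, hzv'⟩ := hex.exists_adj
  have hv'_uniq : ∀ x ∈ t, ∀ y ∈ t' \ t, G.Adj x y → y = v' :=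
    fun x hx y hy hxy => hex.eq_of_adj hy hv' ⟨x, hx, hxy⟩ ⟨z, hz, hzv'⟩
  have hzw : z ≠ w := fun h => hw_nadj v' (Finset.mem_sdiff.1 hv').1 (h ▸ hzv')
  have hs_union : IsTube G (t.erase w ∪ t') :=
    hs.union_of_adj ht' (Finset.mem_erase.2 ⟨hzw, hz⟩) (Finset.mem_sdiff.1 hv').1 hzv'
  have hs' : IsTube G ((t ∪ t').erase w) := erase_union_eq_of_notMem hwt' ▸ hs_union
  refine ⟨?_, ?_, nvec_erase_add_nvec hwt hwt' hs⟩
  · refine exchangeableT_of_unique_adj hs ht' hs_union (va := v) (vb := v') (by grind)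
      (by grind) (fun x hx y hy hxy => hv'_uniq x (Finset.mem_of_mem_erase hx) y (by grind) hxy)
      fun x hx y hy hxy => hvuniq y (by grind) ⟨(Finset.mem_sdiff.1 hy).2, x, hx, hxy.symm⟩
  · refine exchangeableT_of_unique_adj ht hs' ?_ (va := w) (vb := v') (by grind) (by grind)
      (fun x hx y hy hxy => hv'_uniq x hx y (by grind) hxy) fun x hx y hy hxy => by grind
    rw [Finset.union_erase_of_mem hwt, Finset.union_left_idem]
    exact hex.isTube_union

theorem stmt15 (G : SimpleGraph V) (t t' : Finset V)
    (ht : IsTube G t) (ht' : IsTube G t') (hex : ExchangeableT G t t')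
    (hbig : 2 ≤ (t \ t').card)
    (v : V) (hv : v ∈ t \ t') (hvn : NbrOf G t' v)
    (hvuniq : ∀ u ∈ t \ t', NbrOf G t' u → u = v)
    (w : V) (hw : w ∈ t \ t') (hwv : w ≠ v) (hwnd : NonDisc G (t \ t') w) :
    ExchangeableT G (t.erase w) t' ∧
    ExchangeableT G t ((t ∪ t').erase w) ∧
    nvec G (t.erase w) t' + nvec G t ((t ∪ t').erase w) = nvec G t t' :=
  stmt15_general G t t' ht ht' hex v hv hvuniq w hw hwv hwnd
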